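/- Let (Ω, μ) be a finite measure space, let δ ∈ (0, 1/2), and let g : (-1,1) → ℝ be differentiable on (-1,1) with M := sup{|g'(s)| : |s| ≤ 1-δ} < ∞. Let c, c_ε : Ω → ℝ be measurable with |c(x)| ≤ 1 - 2δ for μ-a.e. x and |c_ε(x)| < 1 for μ-a.e. x, and assume g∘c and g∘c_ε belong to L²(μ) and c - c_ε ∈ L²(μ). Then ∫_Ω |g(c_ε(x)) - g(c(x))| dμ(x) ≤ ( δ⁻¹·(‖g∘c_ε‖_{L²(μ)} + ‖g∘c‖_{L²(μ)}) + M·μ(Ω)^{1/2} ) · ‖c_ε - c‖_{L²(μ)}. -/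

import Mathlib

open MeasureTheory Set

/-!
Split `Ω` according to whether `|c_ε - c| ≥ δ`. On that set, Chebyshev gives
`μ{|c_ε - c| ≥ δ}^{1/2} ≤ δ⁻¹ ‖c_ε - c‖₂`, and Cauchy–Schwarz bounds the integral of
`|g ∘ c_ε - g ∘ c|` there by this times `‖g ∘ c_ε‖₂ + ‖g ∘ c‖₂`. Off it, `|c| ≤ 1 - 2δ` forces both
`c` and `c_ε` into `[-(1-δ), 1-δ]`, where `g` is `M`-Lipschitz by the mean value theorem, and
Cauchy–Schwarz on all of `Ω` gives the term `M μ(Ω)^{1/2} ‖c_ε - c‖₂`.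
-/

namespace MeasureTheory

variable {Ω E F : Type*} [MeasurableSpace Ω] {μ : Measure Ω}
  [NormedAddCommGroup E] [NormedAddCommGroup F]

theorem setLIntegral_enorm_le_measure_rpow_mul_eLpNorm_two {f : Ω → E}
    (hf : AEStronglyMeasurable f μ) (s : Set Ω) :
    ∫⁻ x in s, ‖f x‖ₑ ∂μ ≤ μ s ^ (1 / 2 : ℝ) * eLpNorm f 2 μ := by
  have holder := eLpNorm_le_eLpNorm_mul_rpow_measure_univ (μ := μ.restrict s)
    (p := 1) (q := 2) one_le_two hf.restrict
  rw [eLpNorm_one_eq_lintegral_enorm, Measure.restrict_apply_univ] at holder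
  calc ∫⁻ x in s, ‖f x‖ₑ ∂μ ≤ eLpNorm f 2 (μ.restrict s) * μ s ^ (1 / 2 : ℝ) := by
        convert holder using 3
        norm_num
    _ ≤ μ s ^ (1 / 2 : ℝ) * eLpNorm f 2 μ := by
      rw [mul_comm]
      exact mul_le_mul_right (eLpNorm_mono_measure f Measure.restrict_le_self) _

theorem measure_setOf_le_norm_rpow_half_le {f : Ω → E} (hf : AEStronglyMeasurable f μ)
    {ε : ℝ} (hε : 0 < ε) :
    μ {x | ε ≤ ‖f x‖} ^ (1 / 2 : ℝ) ≤ ENNReal.ofReal ε⁻¹ * eLpNorm f 2 μ := by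
  have chebyshev := meas_ge_le_mul_pow_eLpNorm_enorm μ two_ne_zero ENNReal.ofNat_ne_top hf
    (ε := ENNReal.ofReal ε) (by simpa using hε) (by simp)
  have hset : {x | ε ≤ ‖f x‖} = {x | ENNReal.ofReal ε ≤ ‖f x‖ₑ} := by
    ext x
    simp [← ofReal_norm, ENNReal.ofReal_le_ofReal_iff (norm_nonneg _)]
  rw [hset]
  calc μ {x | ENNReal.ofReal ε ≤ ‖f x‖ₑ} ^ (1 / 2 : ℝ)
      ≤ ((ENNReal.ofReal ε)⁻¹ ^ (2 : ℝ) * eLpNorm f 2 μ ^ (2 : ℝ)) ^ (1 / 2 : ℝ) := by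
        gcongr
        simpa using chebyshev
    _ = ENNReal.ofReal ε⁻¹ * eLpNorm f 2 μ := by
        rw [ENNReal.mul_rpow_of_nonneg _ _ (by norm_num), ← ENNReal.rpow_mul, ← ENNReal.rpow_mul,
          ENNReal.ofReal_inv_of_pos hε]
        norm_num

theorem lintegral_enorm_le_of_norm_le_mul_of_norm_lt {h : Ω → E} {k : Ω → F}
    (hh : AEStronglyMeasurable h μ) (hk : AEStronglyMeasurable k μ) {ε L : ℝ} (hε : 0 < ε)
    (hhk : ∀ᵐ x ∂μ, ‖k x‖ < ε → ‖h x‖ₑ ≤ ENNReal.ofReal L * ‖k x‖ₑ) :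
    ∫⁻ x, ‖h x‖ₑ ∂μ ≤
      (ENNReal.ofReal ε⁻¹ * eLpNorm h 2 μ + ENNReal.ofReal L * μ univ ^ (1 / 2 : ℝ)) *
        eLpNorm k 2 μ := by
  set A := {x | ε ≤ ‖k x‖}
  calc ∫⁻ x, ‖h x‖ₑ ∂μ ≤ ∫⁻ x, A.indicator (‖h ·‖ₑ) x + ENNReal.ofReal L * ‖k x‖ₑ ∂μ := by
        refine lintegral_mono_ae (hhk.mono fun x hx => ?_)
        by_cases hxA : x ∈ A
        · simp [indicator_of_mem hxA]
        · simpa [indicator_of_notMem hxA] using hx (not_le.1 hxA)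
    _ = ∫⁻ x, A.indicator (‖h ·‖ₑ) x ∂μ + ENNReal.ofReal L * ∫⁻ x, ‖k x‖ₑ ∂μ := by
        rw [lintegral_add_right' _ (hk.enorm.const_mul _),
          lintegral_const_mul' _ _ ENNReal.ofReal_ne_top]
    _ ≤ μ A ^ (1 / 2 : ℝ) * eLpNorm h 2 μ +
          ENNReal.ofReal L * (μ univ ^ (1 / 2 : ℝ) * eLpNorm k 2 μ) := by
        gcongr
        · exact (lintegral_indicator_le _ _).trans
            (setLIntegral_enorm_le_measure_rpow_mul_eLpNorm_two hh A)
        · simpa using setLIntegral_enorm_le_measure_rpow_mul_eLpNorm_two hk univ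
    _ ≤ ENNReal.ofReal ε⁻¹ * eLpNorm k 2 μ * eLpNorm h 2 μ +
          ENNReal.ofReal L * (μ univ ^ (1 / 2 : ℝ) * eLpNorm k 2 μ) := by
        gcongr
        exact measure_setOf_le_norm_rpow_half_le hk hε
    _ = _ := by ring

theorem integral_norm_le_of_norm_le_mul_of_norm_lt [IsFiniteMeasure μ] {h : Ω → E} {k : Ω → F}
    (hh : MemLp h 2 μ) (hk : MemLp k 2 μ) {ε L : ℝ} (hε : 0 < ε) (hL : 0 ≤ L)
    (hhk : ∀ᵐ x ∂μ, ‖k x‖ < ε → ‖h x‖ ≤ L * ‖k x‖) :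
    ∫ x, ‖h x‖ ∂μ ≤
      (ε⁻¹ * (eLpNorm h 2 μ).toReal + L * (μ univ).toReal ^ (1 / 2 : ℝ)) *
        (eLpNorm k 2 μ).toReal := by
  have hhk' : ∀ᵐ x ∂μ, ‖k x‖ < ε → ‖h x‖ₑ ≤ ENNReal.ofReal L * ‖k x‖ₑ := by
    filter_upwards [hhk] with x hx hsmall
    rw [← ofReal_norm, ← ofReal_norm, ← ENNReal.ofReal_mul hL]
    exact ENNReal.ofReal_le_ofReal (hx hsmall)
  have hbound := lintegral_enorm_le_of_norm_le_mul_of_norm_lt hh.1 hk.1 hε hhk'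
  rw [integral_norm_eq_lintegral_enorm hh.1]
  refine (ENNReal.toReal_mono (by finiteness) hbound).trans_eq ?_
  rw [ENNReal.toReal_mul, ENNReal.toReal_add (by finiteness) (by finiteness), ENNReal.toReal_mul,
    ENNReal.toReal_mul, ENNReal.toReal_ofReal (inv_nonneg.2 hε.le), ENNReal.toReal_ofReal hL,
    ENNReal.toReal_rpow]

end MeasureTheory

theorem stmt_10_general {Ω : Type*} [MeasurableSpace Ω] (μ : Measure Ω) [IsFiniteMeasure μ]
    (δ : ℝ) (hδ : δ ∈ Ioo (0 : ℝ) (1 / 2))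
    (g g' : ℝ → ℝ) (hg : ∀ s ∈ Ioo (-1 : ℝ) 1, HasDerivAt g (g' s) s)
    (M : ℝ) (hM : ∀ s : ℝ, |s| ≤ 1 - δ → |g' s| ≤ M)
    (c cε : Ω → ℝ)
    (hcsep : ∀ᵐ x ∂μ, |c x| ≤ 1 - 2 * δ)
    (hgc : MemLp (fun x => g (c x)) 2 μ) (hgcε : MemLp (fun x => g (cε x)) 2 μ)
    (hdiff : MemLp (fun x => c x - cε x) 2 μ) :
    ∫ x, |g (cε x) - g (c x)| ∂μ ≤
      (δ⁻¹ * ((eLpNorm (fun x => g (cε x)) 2 μ).toReal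
          + (eLpNorm (fun x => g (c x)) 2 μ).toReal)
        + M * ((μ Set.univ).toReal) ^ (1 / 2 : ℝ)) *
      (eLpNorm (fun x => cε x - c x) 2 μ).toReal := by
  obtain ⟨hδ, hδ_half⟩ := hδ
  have hM_nonneg : 0 ≤ M := (abs_nonneg _).trans (hM 0 (by rw [abs_zero]; linarith))
  have lipschitz : ∀ a b : ℝ, |a| ≤ 1 - δ → |b| ≤ 1 - δ → |g a - g b| ≤ M * |a - b| := by
    intro a b ha hb
    have hIcc : Icc (-(1 - δ)) (1 - δ) ⊆ Ioo (-1) 1 := Icc_subset_Ioo (by linarith) (by linarith)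
    simpa [Real.norm_eq_abs] using
      (convex_Icc (-(1 - δ)) (1 - δ)).norm_image_sub_le_of_norm_hasDerivWithin_le
        (fun s hs => (hg s (hIcc hs)).hasDerivWithinAt) (fun s hs => hM s (abs_le.2 hs))
        (abs_le.1 hb) (abs_le.1 ha)
  have hsmall : ∀ᵐ x ∂μ, ‖cε x - c x‖ < δ →
      ‖g (cε x) - g (c x)‖ ≤ M * ‖cε x - c x‖ := by
    filter_upwards [hcsep] with x hc hclose
    rw [Real.norm_eq_abs] at hclose ⊢
    have hcε : |cε x| ≤ 1 - δ := by
      linarith [abs_sub_abs_le_abs_sub (cε x) (c x)]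
    exact lipschitz _ _ hcε (by linarith)
  have hdiff' : MemLp (fun x => cε x - c x) 2 μ := by simpa [Pi.neg_def] using hdiff.neg
  calc ∫ x, |g (cε x) - g (c x)| ∂μ = ∫ x, ‖g (cε x) - g (c x)‖ ∂μ := by
        simp only [Real.norm_eq_abs]
    _ ≤ (δ⁻¹ * (eLpNorm (fun x => g (cε x) - g (c x)) 2 μ).toReal +
          M * (μ univ).toReal ^ (1 / 2 : ℝ)) * (eLpNorm (fun x => cε x - c x) 2 μ).toReal :=
        integral_norm_le_of_norm_le_mul_of_norm_lt (hgcε.sub hgc) hdiff' hδ hM_nonneg hsmall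
    _ ≤ _ := by
        gcongr
        exact ENNReal.toReal_le_add (eLpNorm_sub_le hgcε.1 hgc.1 one_le_two)
          hgcε.eLpNorm_ne_top hgc.eLpNorm_ne_top

/-- Estimate (5.5) of the paper: if `|c| ≤ 1 - 2δ` a.e., `|c_ε| < 1` a.e., `g` is differentiable
on `(-1,1)` with `|g'| ≤ M` on `[-(1-δ), 1-δ]`, and `g∘c, g∘c_ε, c - c_ε ∈ L²(μ)`, then
`‖g(c_ε) - g(c)‖_{L¹} ≤ (δ⁻¹ (‖g∘c_ε‖_{L²} + ‖g∘c‖_{L²}) + M μ(Ω)^{1/2}) ‖c_ε - c‖_{L²}`. -/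
theorem stmt_10 {Ω : Type*} [MeasurableSpace Ω] (μ : Measure Ω) [IsFiniteMeasure μ]
    (δ : ℝ) (hδ : δ ∈ Ioo (0 : ℝ) (1 / 2))
    (g g' : ℝ → ℝ) (hg : ∀ s ∈ Ioo (-1 : ℝ) 1, HasDerivAt g (g' s) s)
    (M : ℝ) (hM : ∀ s : ℝ, |s| ≤ 1 - δ → |g' s| ≤ M)
    (c cε : Ω → ℝ) (hc : Measurable c) (hcε : Measurable cε)
    (hcsep : ∀ᵐ x ∂μ, |c x| ≤ 1 - 2 * δ) (hcεb : ∀ᵐ x ∂μ, |cε x| < 1)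
    (hgc : MemLp (fun x => g (c x)) 2 μ) (hgcε : MemLp (fun x => g (cε x)) 2 μ)
    (hdiff : MemLp (fun x => c x - cε x) 2 μ) :
    ∫ x, |g (cε x) - g (c x)| ∂μ ≤
      (δ⁻¹ * ((eLpNorm (fun x => g (cε x)) 2 μ).toReal
          + (eLpNorm (fun x => g (c x)) 2 μ).toReal)
        + M * ((μ Set.univ).toReal) ^ (1 / 2 : ℝ)) *
      (eLpNorm (fun x => cε x - c x) 2 μ).toReal :=
  stmt_10_general μ δ hδ g g' hg M hM c cε hcsep hgc hgcε hdiff
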